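/- arXiv:2602.04125 — 6 statements merged into one kernel-verified Lean document; each statement's English description precedes it below -/
import Mathlib

section
/- Let d ≥ 1 be an integer, let Leb denote Lebesgue measure on ℝ^d, and let B(x, ρ) denote the closed Euclidean ball of radius ρ centered at x. Let 0 < c₀ ≤ 1 and H > 0, let R ⊆ ℝ^d be Lebesgue measurable, and let x₀, x̃ ∈ ℝ^d satisfy ‖x̃ − x₀‖₂ ≤ (1 − (1 − c₀/2^d)^{1/d})·H. Set ρ = H − ‖x̃ − x₀‖₂ (so ρ > 0). If Leb[R ∩ B(x₀, ρ)] ≥ (c₀/2^{d−1})·Leb[B(x₀, ρ)], then Leb[R ∩ B(x̃, H)] ≥ (c₀/2^d)·Leb[B(x̃, H)]. -/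
open MeasureTheory Metric

/-- Geometric core of Proposition 3.6: measure-regularity of a set `R` at `x₀` transfers to a
nearby point `xt`, with the regularity constant degraded by a factor `2`. -/
theorem stmt0 (d : ℕ) (hd : 1 ≤ d) (c₀ H : ℝ) (hc₀ : 0 < c₀) (hc₁ : c₀ ≤ 1) (hH : 0 < H)
    (R : Set (EuclideanSpace ℝ (Fin d))) (hR : MeasurableSet R)
    (x₀ xt : EuclideanSpace ℝ (Fin d))
    (hdist : dist xt x₀ ≤ (1 - (1 - c₀ / 2 ^ d) ^ ((1 : ℝ) / d)) * H)
    (ρ : ℝ) (hρ : ρ = H - dist xt x₀)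
    (hreg : ENNReal.ofReal (c₀ / 2 ^ (d - 1)) * volume (closedBall x₀ ρ)
      ≤ volume (R ∩ closedBall x₀ ρ)) :
    ENNReal.ofReal (c₀ / 2 ^ d) * volume (closedBall xt H)
      ≤ volume (R ∩ closedBall xt H) := by
  have hd0 : (d : ℝ) ≠ 0 := Nat.cast_ne_zero.mpr (by omega)
  set b : ℝ := 1 - c₀ / 2 ^ d with hb_def
  have h2d : (2:ℝ) ≤ 2 ^ d := by
    calc (2:ℝ) = 2 ^ 1 := by norm_num
    _ ≤ 2 ^ d := pow_le_pow_right₀ (by norm_num) hd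
  have hb_half : (1:ℝ)/2 ≤ b := by
    have h1 : c₀ / 2 ^ d ≤ 1 / 2 := by
      rw [div_le_div_iff₀ (by positivity) (by norm_num)]
      nlinarith
    simp only [hb_def]; linarith
  clear_value b
  have hb0 : (0:ℝ) ≤ b := by linarith
  set t : ℝ := b ^ ((1 : ℝ) / d) with ht_def
  have ht_pow : t ^ d = b := by
    rw [ht_def, ← Real.rpow_natCast (b ^ ((1:ℝ)/d)) d, ← Real.rpow_mul hb0]
    rw [one_div_mul_cancel hd0, Real.rpow_one]
  have ht0 : 0 ≤ t := Real.rpow_nonneg hb0 _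
  have htpos : 0 < t := Real.rpow_pos_of_pos (by linarith) _
  clear_value t
  -- ρ bounds
  have hρ_ge : H * t ≤ ρ := by
    rw [hρ]; nlinarith [hdist]
  have hρ_pos : 0 < ρ := by nlinarith
  -- ball inclusion
  have hsub : closedBall x₀ ρ ⊆ closedBall xt H := by
    intro y hy
    simp only [mem_closedBall] at hy ⊢
    calc dist y xt ≤ dist y x₀ + dist x₀ xt := dist_triangle _ _ _
    _ ≤ ρ + dist xt x₀ := by rw [dist_comm x₀ xt]; linarith
    _ = H := by rw [hρ]; ring
  -- volumes via scaling
  have hvol₀ : volume (closedBall x₀ ρ)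
      = ENNReal.ofReal (ρ ^ d) * volume (closedBall (0 : EuclideanSpace ℝ (Fin d)) 1) := by
    rw [Measure.addHaar_closedBall' _ _ hρ_pos.le, finrank_euclideanSpace_fin]
  have hvolt : volume (closedBall xt H)
      = ENNReal.ofReal (H ^ d) * volume (closedBall (0 : EuclideanSpace ℝ (Fin d)) 1) := by
    rw [Measure.addHaar_closedBall' _ _ hH.le, finrank_euclideanSpace_fin]
  -- key real inequality
  have hkey : c₀ / 2 ^ d * H ^ d ≤ c₀ / 2 ^ (d - 1) * ρ ^ d := by
    have hρd : H ^ d * b ≤ ρ ^ d := by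
      calc H ^ d * b = (H * t) ^ d := by rw [mul_pow, ht_pow]
      _ ≤ ρ ^ d := pow_le_pow_left₀ (by positivity) hρ_ge d
    have h2 : (2:ℝ) ^ d = 2 * 2 ^ (d - 1) := by
      rw [← pow_succ']
      congr 1; omega
    have h2pos : (0:ℝ) < 2 ^ (d - 1) := by positivity
    rw [h2, div_mul_eq_mul_div, div_mul_eq_mul_div, div_le_div_iff₀ (by positivity) h2pos]
    have hHd : (0:ℝ) < H ^ d := by positivity
    have e1 : c₀ * (H ^ d * b) * (2 * 2 ^ (d-1)) ≤ c₀ * ρ ^ d * (2 * 2 ^ (d-1)) := by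
      have := mul_le_mul_of_nonneg_left hρd hc₀.le
      nlinarith
    have e2 : 0 ≤ c₀ * H ^ d * 2 ^ (d-1) * (2 * b - 1) := by
      have : (0:ℝ) ≤ 2 * b - 1 := by linarith
      positivity
    nlinarith
  -- conclude
  calc ENNReal.ofReal (c₀ / 2 ^ d) * volume (closedBall xt H)
      = ENNReal.ofReal (c₀ / 2 ^ d * H ^ d)
        * volume (closedBall (0 : EuclideanSpace ℝ (Fin d)) 1) := by
        rw [hvolt, ← mul_assoc, ← ENNReal.ofReal_mul (by positivity)]
    _ ≤ ENNReal.ofReal (c₀ / 2 ^ (d - 1) * ρ ^ d)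
        * volume (closedBall (0 : EuclideanSpace ℝ (Fin d)) 1) := by
        gcongr ?_ * _
        exact ENNReal.ofReal_le_ofReal hkey
    _ = ENNReal.ofReal (c₀ / 2 ^ (d - 1)) * volume (closedBall x₀ ρ) := by
        rw [hvol₀, ← mul_assoc, ← ENNReal.ofReal_mul (by positivity)]
    _ ≤ volume (R ∩ closedBall x₀ ρ) := hreg
    _ ≤ volume (R ∩ closedBall xt H) := by
        exact measure_mono (Set.inter_subset_inter_right R hsub)
end

section
/- Let A ⊆ ℝ be a finite nonempty set, ε ≥ 0, and let M = max A. If u ∈ A is ε-chained to M in A and v ∈ A is not ε-chained to M in A, then u − v > ε. In particular u > v. -/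
/-- `u` and `v` are `ε`-chained in the finite set `A ⊆ ℝ`: they are joined by a finite
sequence of elements of `A` with consecutive distances at most `ε` (the reflexive-transitive
closure of the `ε`-linked relation restricted to `A`). -/
def EpsChained (A : Finset ℝ) (ε : ℝ) (u v : ℝ) : Prop :=
  Relation.ReflTransGen (fun a b => a ∈ A ∧ b ∈ A ∧ |a - b| ≤ ε) u v

/-- Separation property of `ε`-chaining: if `u ∈ A` is `ε`-chained to `max A` and `v ∈ A` is
not, then `u − v > ε`; in particular `u > v`. -/
theorem stmt2 (A : Finset ℝ) (hA : A.Nonempty) (ε : ℝ) (hε : 0 ≤ ε) (u v : ℝ)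
    (hu : u ∈ A) (hv : v ∈ A)
    (hchain : EpsChained A ε u (A.max' hA))
    (hnot : ¬ EpsChained A ε v (A.max' hA)) :
    ε < u - v ∧ v < u := by
  have key : v < u := by
    induction hchain using Relation.ReflTransGen.head_induction_on with
    | refl =>
        rcases lt_or_eq_of_le (A.le_max' v hv) with h | h
        · exact h
        · exact absurd (h ▸ Relation.ReflTransGen.refl) hnot
    | @head x y hxy hyM ih =>
        obtain ⟨hxA, hyA, hdist⟩ := hxy
        by_contra hle
        push_neg at hle
        have hvy := ih hyA
        obtain ⟨h1, h2⟩ := abs_sub_le_iff.mp hdist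
        have hd : |v - y| ≤ ε := by
          rw [abs_sub_le_iff]
          constructor <;> linarith
        exact hnot (Relation.ReflTransGen.head ⟨hv, hyA, hd⟩ hyM)
  refine ⟨?_, key⟩
  by_contra h
  push_neg at h
  have : |v - u| ≤ ε := by rw [abs_sub_le_iff]; constructor <;> linarith
  exact hnot (Relation.ReflTransGen.head ⟨hv, hu, this⟩ hchain)
end

section
/- Let K be a finite nonempty set, ε ≥ 0, and f, f̂ : K → ℝ with |f̂(k) − f(k)| ≤ ε/2 for all k ∈ K. Let A = {f̂(l) : l ∈ K} ⊆ ℝ and define the candidate set K_c = {k ∈ K : f̂(k) is ε-chained to max_{l∈K} f̂(l) in A}. Then: (i) every k* ∈ K with f(k*) = max_{l∈K} f(l) belongs to K_c; and (ii) for every k ∈ K_c, max_{l∈K} f(l) − f(k) ≤ |K|·ε, where |K| is the cardinality of K. -/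
lemma EpsChained.symm {A : Finset ℝ} {ε u v : ℝ} (h : EpsChained A ε u v) :
    EpsChained A ε v u := by
  induction h with
  | refl => exact Relation.ReflTransGen.refl
  | tail hwc hstep ih =>
    exact Relation.ReflTransGen.head ⟨hstep.2.1, hstep.1, by rw [abs_sub_comm]; exact hstep.2.2⟩ ih

/-- If a chain starting at `u ≥ a` reaches `v < a`, then some chain element `b < a`
is within `ε` below `a`, and `b` is chained to `v`. -/
lemma exists_descent {A : Finset ℝ} {ε : ℝ} :
    ∀ {u v : ℝ}, EpsChained A ε u v → ∀ a : ℝ, v < a → a ≤ u →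
      ∃ b ∈ A, b < a ∧ a - b ≤ ε ∧ EpsChained A ε b v := by
  intro u v h
  induction h using Relation.ReflTransGen.head_induction_on with
  | refl => intro a hva hau; exact absurd (lt_of_lt_of_le hva hau) (lt_irrefl v)
  | head hstep hchain ih =>
    rename_i x w
    intro a hva hau
    by_cases hw : a ≤ w
    · exact ih a hva hw
    · push_neg at hw
      refine ⟨w, hstep.2.1, hw, ?_, hchain⟩
      have : x - w ≤ ε := le_trans (le_abs_self _) hstep.2.2
      linarith

lemma chain_bound {A : Finset ℝ} {ε : ℝ} (hε : 0 ≤ ε) :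
    ∀ n : ℕ, ∀ u v : ℝ, (A.filter (· < u)).card ≤ n → EpsChained A ε u v → v ≤ u →
      u - v ≤ ε * n := by
  intro n
  induction n with
  | zero =>
    intro u v hcard h hvu
    rcases eq_or_lt_of_le hvu with heq | hlt
    · simp [heq]
    · obtain ⟨b, hbA, hba, -, -⟩ := exists_descent h u hlt le_rfl
      have : b ∈ A.filter (· < u) := Finset.mem_filter.mpr ⟨hbA, hba⟩
      have := Finset.card_pos.mpr ⟨b, this⟩
      omega
  | succ n ih =>
    intro u v hcard h hvu
    rcases eq_or_lt_of_le hvu with heq | hlt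
    · have : u - v = 0 := by rw [heq]; ring
      rw [this]; positivity
    · obtain ⟨b, hbA, hba, hub, hbv⟩ := exists_descent h u hlt le_rfl
      by_cases hvb : v ≤ b
      · have hsub : A.filter (· < b) ⊆ (A.filter (· < u)).erase b := by
          intro x hx
          rw [Finset.mem_filter] at hx
          refine Finset.mem_erase.mpr ⟨ne_of_lt hx.2, Finset.mem_filter.mpr ⟨hx.1, lt_trans hx.2 hba⟩⟩
        have hbmem : b ∈ A.filter (· < u) := Finset.mem_filter.mpr ⟨hbA, hba⟩
        have hcard' : (A.filter (· < b)).card ≤ n := by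
          have h1 := Finset.card_le_card hsub
          have h2 : ((A.filter (· < u)).erase b).card = (A.filter (· < u)).card - 1 :=
            Finset.card_erase_of_mem hbmem
          omega
        have hbn : b - v ≤ ε * n := ih b v hcard' hbv hvb
        push_cast
        linarith
      · push_neg at hvb
        have : ε * 1 ≤ ε * (n + 1) := by
          apply mul_le_mul_of_nonneg_left _ hε
          norm_num
        push_cast at this ⊢
        linarith

/-- Properties of the chained candidate set `K_c` built from an estimate `fhat` that is
uniformly within `ε/2` of the true reward `f`:
(i) every maximizer of `f` belongs to `K_c`;
(ii) every arm of `K_c` is at most `|K|·ε` suboptimal for `f`. -/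
theorem stmt3 {K : Type*} [Fintype K] [Nonempty K] (ε : ℝ) (hε : 0 ≤ ε)
    (f fhat : K → ℝ) (hclose : ∀ k, |fhat k - f k| ≤ ε / 2)
    (A : Finset ℝ) (hA : A = Finset.image fhat Finset.univ)
    (Kc : Set K)
    (hKc : Kc = {k | EpsChained A ε (fhat k)
      (Finset.univ.sup' Finset.univ_nonempty fhat)}) :
    (∀ k', f k' = Finset.univ.sup' Finset.univ_nonempty f → k' ∈ Kc) ∧
    (∀ k ∈ Kc, Finset.univ.sup' Finset.univ_nonempty f - f k ≤ (Fintype.card K : ℝ) * ε) := by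
  set Mhat := Finset.univ.sup' Finset.univ_nonempty fhat with hMhat
  set M := Finset.univ.sup' Finset.univ_nonempty f with hM
  -- Mhat is attained
  obtain ⟨k0, -, hk0⟩ := Finset.exists_mem_eq_sup' Finset.univ_nonempty fhat
  obtain ⟨kstar, -, hkstar⟩ := Finset.exists_mem_eq_sup' Finset.univ_nonempty f
  have hMhatA : Mhat ∈ A := by rw [hA, hMhat, hk0]; exact Finset.mem_image_of_mem _ (Finset.mem_univ k0)
  have hfA : ∀ k, fhat k ∈ A := fun k => by
    rw [hA]; exact Finset.mem_image_of_mem _ (Finset.mem_univ k)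
  have hle : ∀ k, fhat k ≤ Mhat := fun k => Finset.le_sup' _ (Finset.mem_univ k)
  have hleM : ∀ k, f k ≤ M := fun k => Finset.le_sup' _ (Finset.mem_univ k)
  have habs2 : ∀ k, f k - fhat k ≤ ε / 2 := fun k => by
    have := abs_sub_comm (fhat k) (f k) ▸ hclose k
    calc f k - fhat k ≤ |f k - fhat k| := le_abs_self _
    _ ≤ ε / 2 := by rw [abs_sub_comm]; exact hclose k
  have habs1 : ∀ k, fhat k - f k ≤ ε / 2 := fun k => le_trans (le_abs_self _) (hclose k)
  have hMeq : M = f kstar := hM.trans hkstar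
  have hMle : M ≤ Mhat + ε / 2 := by
    have h1 := habs2 kstar
    have h2 := hle kstar
    linarith [hMeq]
  have hMhateq : Mhat = fhat k0 := hMhat.trans hk0
  have hMhatle : Mhat ≤ M + ε / 2 := by
    have h1 := habs1 k0
    have h2 := hleM k0
    linarith [hMhateq]
  constructor
  · intro k' hk'
    rw [hKc]
    show EpsChained A ε (fhat k') Mhat
    apply Relation.ReflTransGen.single
    refine ⟨hfA k', hMhatA, ?_⟩
    rw [abs_sub_comm, abs_of_nonneg (by linarith [hle k'])]
    have h1 : M = f k' := hk'.symm
    have h2 := habs2 k'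
    linarith [hMhatle]
  · intro k hk
    rw [hKc] at hk
    have hchain : EpsChained A ε (fhat k) Mhat := hk
    have hcardA : 1 ≤ A.card := Finset.card_pos.mpr ⟨Mhat, hMhatA⟩
    have hAK : A.card ≤ Fintype.card K := by
      rw [hA]
      calc (Finset.image fhat Finset.univ).card ≤ Finset.univ.card :=
        Finset.card_image_le
      _ = Fintype.card K := Finset.card_univ
    -- bound |fhat k - Mhat| ≤ ε * (A.card - 1)
    have key : |fhat k - Mhat| ≤ ε * (A.card - 1 : ℕ) := by
      have filt : ∀ x ∈ A, (A.filter (· < x)).card ≤ A.card - 1 := by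
        intro x hx
        have hsub : A.filter (· < x) ⊆ A.erase x := by
          intro y hy
          rw [Finset.mem_filter] at hy
          exact Finset.mem_erase.mpr ⟨ne_of_lt hy.2, hy.1⟩
        have := Finset.card_le_card hsub
        rw [Finset.card_erase_of_mem hx] at this
        exact this
      rcases le_total (fhat k) Mhat with hcase | hcase
      · rw [abs_sub_comm, abs_of_nonneg (by linarith)]
        exact chain_bound hε _ Mhat (fhat k) (filt _ hMhatA) hchain.symm hcase
      · rw [abs_of_nonneg (by linarith)]
        exact chain_bound hε _ (fhat k) Mhat (filt _ (hfA k)) hchain hcase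
    have hcast : ((A.card - 1 : ℕ) : ℝ) + 1 = (A.card : ℝ) := by
      rw [Nat.cast_sub hcardA]; push_cast; ring
    have h1 : Mhat - fhat k ≤ |fhat k - Mhat| := by
      rw [abs_sub_comm]; exact le_abs_self _
    have h2 := habs1 k
    have hcardcast : (A.card : ℝ) ≤ (Fintype.card K : ℝ) := by exact_mod_cast hAK
    have : M - f k ≤ ε * ((A.card - 1 : ℕ) : ℝ) + ε := by linarith
    calc M - f k ≤ ε * ((A.card - 1 : ℕ) : ℝ) + ε := this
      _ = ε * (((A.card - 1 : ℕ) : ℝ) + 1) := by ring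
      _ = ε * (A.card : ℝ) := by rw [hcast]
      _ ≤ ε * (Fintype.card K : ℝ) := by
          apply mul_le_mul_of_nonneg_left hcardcast hε
      _ = (Fintype.card K : ℝ) * ε := mul_comm _ _
end

section
/- Let f₁, f₂ : ℝ → ℝ be continuously differentiable, let Ω ⊆ ℝ be a compact interval, let Z = {x ∈ Ω : f₁(x) = f₂(x)}, and let c̃ > 0. Assume |f₁′(x) − f₂′(x)| > 2/c̃ for every x ∈ Z. Then there exists 𝔯 > 0 such that for every x₀ ∈ Z and every x₁ ∈ Ω with |x₁ − x₀| ≤ 𝔯, one has |f₁(x₁) − f₂(x₁)| ≥ |x₁ − x₀|/c̃. -/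
/-!
By uniform continuity of `(f₁ - f₂)'` on the compact interval, the bound `|(f₁ - f₂)'| > 2/c̃`
on the tie set degrades to `|(f₁ - f₂)'| ≥ 1/c̃` on a uniform neighbourhood of it; the mean
value theorem on the segment from a tie point then gives linear growth of the gap.
-/

open Set

theorem IsCompact.exists_pos_forall_dist_le_le_norm {α E : Type*} [PseudoMetricSpace α]
    [SeminormedAddCommGroup E] {K Z : Set α} {φ : α → E} {ε : ℝ} (hK : IsCompact K)
    (hφ : ContinuousOn φ K) (hZK : Z ⊆ K) (hε : 0 < ε) (hZ : ∀ z ∈ Z, 2 * ε < ‖φ z‖) :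
    ∃ δ > 0, ∀ z ∈ Z, ∀ x ∈ K, dist x z ≤ δ → ε ≤ ‖φ x‖ := by
  obtain ⟨δ, hδ, hclose⟩ :=
    Metric.uniformContinuousOn_iff_le.mp (hK.uniformContinuousOn_of_continuous hφ) ε hε
  refine ⟨δ, hδ, fun z hz x hx hxz => ?_⟩
  have hφxz : ‖φ z‖ - ‖φ x‖ ≤ ε := by
    calc ‖φ z‖ - ‖φ x‖ ≤ ‖φ x - φ z‖ := (norm_sub_norm_le _ _).trans_eq (norm_sub_rev _ _)
      _ ≤ ε := by rw [← dist_eq_norm]; exact hclose x hx z (hZK hz) hxz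
  linarith [hZ z hz]

theorem mul_abs_sub_le_abs_sub_of_le_abs_deriv {g : ℝ → ℝ} {x₀ x₁ m : ℝ}
    (hg : ∀ x ∈ uIcc x₀ x₁, DifferentiableAt ℝ g x) (hm : ∀ x ∈ uIcc x₀ x₁, m ≤ |deriv g x|) :
    m * |x₁ - x₀| ≤ |g x₁ - g x₀| := by
  wlog hlt : x₀ < x₁ generalizing x₀ x₁
  · rcases (not_lt.mp hlt).eq_or_lt with heq | hgt
    · simp [heq]
    · rw [abs_sub_comm x₁, abs_sub_comm (g x₁)]
      exact this (uIcc_comm x₀ x₁ ▸ hg) (uIcc_comm x₀ x₁ ▸ hm) hgt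
  have hIcc : Icc x₀ x₁ = uIcc x₀ x₁ := (uIcc_of_lt hlt).symm
  obtain ⟨c, hc, hslope⟩ := exists_deriv_eq_slope g hlt
    (fun x hx => (hg x (hIcc ▸ hx)).continuousAt.continuousWithinAt)
    (fun x hx => (hg x (hIcc ▸ Ioo_subset_Icc_self hx)).differentiableWithinAt)
  have hmc := hm c (hIcc ▸ Ioo_subset_Icc_self hc)
  have hpos : 0 < x₁ - x₀ := sub_pos.mpr hlt
  rw [hslope, abs_div, abs_of_pos hpos, le_div_iff₀ hpos] at hmc
  rwa [abs_of_pos hpos]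

theorem stmt8_general (f₁ f₂ : ℝ → ℝ) (h₁ : ContDiff ℝ 1 f₁) (h₂ : ContDiff ℝ 1 f₂)
    (a b : ℝ) (Ω Z : Set ℝ) (hΩ : Ω = Set.Icc a b)
    (hZ : Z = {x ∈ Ω | f₁ x = f₂ x}) (ctil : ℝ) (hc : 0 < ctil)
    (hder : ∀ x ∈ Z, 2 / ctil < |deriv f₁ x - deriv f₂ x|) :
    ∃ r > 0, ∀ x₀ ∈ Z, ∀ x₁ ∈ Ω, |x₁ - x₀| ≤ r →
      |x₁ - x₀| / ctil ≤ |f₁ x₁ - f₂ x₁| := by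
  subst hΩ hZ
  have hd₁ := h₁.differentiable one_ne_zero
  have hd₂ := h₂.differentiable one_ne_zero
  have hderiv : deriv (f₁ - f₂) = deriv f₁ - deriv f₂ :=
    funext fun x => deriv_sub (hd₁ x) (hd₂ x)
  have hcont : Continuous (deriv (f₁ - f₂)) := (h₁.sub h₂).continuous_deriv le_rfl
  obtain ⟨δ, hδ, hnear⟩ := isCompact_Icc.exists_pos_forall_dist_le_le_norm hcont.continuousOn
    (sep_subset _ _) (one_div_pos.mpr hc) (ε := 1 / ctil) fun z hz => by
      rw [hderiv, mul_one_div]; exact hder z hz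
  refine ⟨δ, hδ, fun x₀ hx₀ x₁ hx₁ hr => ?_⟩
  have hgap := mul_abs_sub_le_abs_sub_of_le_abs_deriv (g := f₁ - f₂) (m := 1 / ctil)
    (fun x _ => (hd₁ x).sub (hd₂ x)) fun x hx =>
      hnear x₀ hx₀ x (uIcc_subset_Icc hx₀.1 hx₁ hx)
        ((Real.dist_eq x x₀).trans_le ((abs_sub_left_of_mem_uIcc hx).trans hr))
  simpa [hx₀.2, div_eq_inv_mul] using hgap

/-- One-dimensional case (Case 1, d = 1) of the proof of Proposition 3.5: if the derivatives
of `f₁` and `f₂` are separated by more than `2/c̃` on the tie set `Z ⊆ Ω`, then near `Z` the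
gap `|f₁ − f₂|` grows at least linearly (with slope `1/c̃`) in the distance to the tie
point. -/
theorem stmt8 (f₁ f₂ : ℝ → ℝ) (h₁ : ContDiff ℝ 1 f₁) (h₂ : ContDiff ℝ 1 f₂)
    (a b : ℝ) (hab : a ≤ b) (Ω Z : Set ℝ) (hΩ : Ω = Set.Icc a b)
    (hZ : Z = {x ∈ Ω | f₁ x = f₂ x}) (ctil : ℝ) (hc : 0 < ctil)
    (hder : ∀ x ∈ Z, 2 / ctil < |deriv f₁ x - deriv f₂ x|) :
    ∃ r > 0, ∀ x₀ ∈ Z, ∀ x₁ ∈ Ω, |x₁ - x₀| ≤ r →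
      |x₁ - x₀| / ctil ≤ |f₁ x₁ - f₂ x₁| :=
  stmt8_general f₁ f₂ h₁ h₂ a b Ω Z hΩ hZ ctil hc hder
end

section
/- Let n, d ≥ 1 be integers, r > 0, λ > 0, C ≥ 0. Let Z be an n × d real matrix with entries satisfying |Z_{ij}| ≤ r for all i, j, and suppose vᵀ(ZᵀZ)v ≥ n·λ·‖v‖₂² for all v ∈ ℝ^d (in particular ZᵀZ is invertible). Let c ∈ ℝⁿ satisfy ∑_{i=1}^{n} |c_i| ≤ C. Then for every z ∈ ℝ^d with ‖z‖₂ ≤ √d·r, one has |zᵀ(ZᵀZ)⁻¹Zᵀc| ≤ d·r²·C/(n·λ). -/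
open Matrix

/-- Cauchy–Schwarz in `√` form. -/
lemma cs_abs {m : ℕ} (f g : Fin m → ℝ) :
    |∑ i, f i * g i| ≤ Real.sqrt (∑ i, f i ^ 2) * Real.sqrt (∑ i, g i ^ 2) := by
  have h := Finset.sum_mul_sq_le_sq_mul_sq Finset.univ f g
  have h1 : (0:ℝ) ≤ Real.sqrt (∑ i, f i ^ 2) * Real.sqrt (∑ i, g i ^ 2) := by positivity
  rw [← Real.sqrt_sq_eq_abs]
  calc Real.sqrt ((∑ i, f i * g i) ^ 2) ≤ Real.sqrt ((∑ i, f i ^ 2) * ∑ i, g i ^ 2) :=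
        Real.sqrt_le_sqrt h
    _ = Real.sqrt (∑ i, f i ^ 2) * Real.sqrt (∑ i, g i ^ 2) :=
        Real.sqrt_mul (by positivity) _

/-- Deterministic corruption-bias bound (equation (eq:ztzinverztcinverzt), Proposition 5.1):
if the entries of `Z` are bounded by `r`, the Gram matrix satisfies
`vᵀ(ZᵀZ)v ≥ n·λ·‖v‖₂²`, and the corruption vector `c` has total budget `C`, then the OLS
bias `zᵀ(ZᵀZ)⁻¹Zᵀc` against any context `z` with `‖z‖₂ ≤ √d·r` is at most
`d·r²·C/(n·λ)`. -/
theorem stmt13 (n d : ℕ) (hn : 1 ≤ n) (hd : 1 ≤ d) (r lam C : ℝ)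
    (hr : 0 < r) (hlam : 0 < lam) (hC : 0 ≤ C)
    (Z : Matrix (Fin n) (Fin d) ℝ) (hZ : ∀ i j, |Z i j| ≤ r)
    (hquad : ∀ v : Fin d → ℝ, (n : ℝ) * lam * (∑ j, v j ^ 2) ≤ v ⬝ᵥ ((Zᵀ * Z) *ᵥ v))
    (c : Fin n → ℝ) (hc : ∑ i, |c i| ≤ C)
    (z : Fin d → ℝ) (hz : Real.sqrt (∑ j, z j ^ 2) ≤ Real.sqrt d * r) :
    |z ⬝ᵥ ((Zᵀ * Z)⁻¹ *ᵥ (Zᵀ *ᵥ c))| ≤ d * r ^ 2 * C / (n * lam) := by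
  have hn' : (0:ℝ) < n := by exact_mod_cast hn
  have hnl : (0:ℝ) < (n:ℝ) * lam := by positivity
  set A : Matrix (Fin d) (Fin d) ℝ := Zᵀ * Z with hA
  -- A is invertible
  have hinj : Function.Injective (A.mulVec) := by
    intro x y hxy
    have h0 : A *ᵥ (x - y) = 0 := by rw [Matrix.mulVec_sub, hxy, sub_self]
    have hq := hquad (x - y)
    rw [h0, dotProduct_zero] at hq
    have hsum : (∑ j, (x - y) j ^ 2) ≤ 0 := by nlinarith
    have hsum0 : (∑ j, (x - y) j ^ 2) = 0 :=
      le_antisymm hsum (Finset.sum_nonneg fun j _ => sq_nonneg _)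
    have hz0 := (Finset.sum_eq_zero_iff_of_nonneg fun j _ => sq_nonneg ((x - y) j)).1 hsum0
    have : x - y = 0 := funext fun j => by
      have := pow_eq_zero_iff (two_ne_zero) |>.1 (hz0 j (Finset.mem_univ j))
      simpa using this
    exact sub_eq_zero.1 this
  have hu : IsUnit A := Matrix.mulVec_injective_iff_isUnit.1 hinj
  have hud : IsUnit A.det := (Matrix.isUnit_iff_isUnit_det A).1 hu
  set w : Fin d → ℝ := A⁻¹ *ᵥ (Zᵀ *ᵥ c) with hw
  have hAw : A *ᵥ w = Zᵀ *ᵥ c := by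
    rw [hw, Matrix.mulVec_mulVec, Matrix.mul_nonsing_inv A hud, Matrix.one_mulVec]
  clear_value w
  set S : ℝ := Real.sqrt (∑ j, w j ^ 2) with hS
  have hS0 : 0 ≤ S := Real.sqrt_nonneg _
  have hS2 : S ^ 2 = ∑ j, w j ^ 2 := Real.sq_sqrt (by positivity)
  clear_value S
  set B : ℝ := Real.sqrt d * r with hB
  have hB0 : 0 ≤ B := by positivity
  have hB2 : B ^ 2 = d * r ^ 2 := by
    rw [hB, mul_pow, Real.sq_sqrt (by positivity)]
  clear_value B
  -- per-row bound on (Z *ᵥ w)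
  have hrow : ∀ i, |(Z *ᵥ w) i| ≤ B * S := by
    intro i
    have h1 : |∑ j, Z i j * w j| ≤
        Real.sqrt (∑ j, Z i j ^ 2) * Real.sqrt (∑ j, w j ^ 2) := cs_abs _ _
    have h2 : Real.sqrt (∑ j, Z i j ^ 2) ≤ B := by
      rw [hB]
      have : (∑ j, Z i j ^ 2) ≤ (d : ℝ) * r ^ 2 := by
        calc (∑ j, Z i j ^ 2) ≤ ∑ _j : Fin d, r ^ 2 := by
              refine Finset.sum_le_sum fun j _ => ?_
              have := hZ i j
              nlinarith [abs_nonneg (Z i j), sq_abs (Z i j)]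
          _ = (d : ℝ) * r ^ 2 := by simp [mul_comm]
      calc Real.sqrt (∑ j, Z i j ^ 2) ≤ Real.sqrt ((d:ℝ) * r ^ 2) :=
            Real.sqrt_le_sqrt this
        _ = Real.sqrt d * r := by
            rw [Real.sqrt_mul (by positivity), Real.sqrt_sq hr.le]
    calc |(Z *ᵥ w) i| = |∑ j, Z i j * w j| := by rw [Matrix.mulVec, dotProduct]
      _ ≤ Real.sqrt (∑ j, Z i j ^ 2) * Real.sqrt (∑ j, w j ^ 2) := h1
      _ ≤ B * S := by rw [hS]; exact mul_le_mul_of_nonneg_right h2 (Real.sqrt_nonneg _)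
  -- key energy inequality
  have hkey : (n : ℝ) * lam * S ^ 2 ≤ B * S * C := by
    have h1 : (n : ℝ) * lam * S ^ 2 ≤ w ⬝ᵥ (A *ᵥ w) := by rw [hS2]; exact hquad w
    have h2 : w ⬝ᵥ (A *ᵥ w) = (Z *ᵥ w) ⬝ᵥ c := by
      rw [hAw, Matrix.dotProduct_mulVec, Matrix.vecMul_transpose]
    have h3 : (Z *ᵥ w) ⬝ᵥ c ≤ B * S * C := by
      calc (Z *ᵥ w) ⬝ᵥ c = ∑ i, (Z *ᵥ w) i * c i := rfl
        _ ≤ ∑ i, (B * S) * |c i| := by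
            refine Finset.sum_le_sum fun i _ => ?_
            calc (Z *ᵥ w) i * c i ≤ |(Z *ᵥ w) i * c i| := le_abs_self _
              _ = |(Z *ᵥ w) i| * |c i| := abs_mul _ _
              _ ≤ (B * S) * |c i| :=
                  mul_le_mul_of_nonneg_right (hrow i) (abs_nonneg _)
        _ = (B * S) * ∑ i, |c i| := by rw [Finset.mul_sum]
        _ ≤ (B * S) * C := mul_le_mul_of_nonneg_left hc (by positivity)
    linarith [h1.trans_eq h2]
  -- bound on S
  have hSbound : S ≤ B * C / ((n : ℝ) * lam) := by
    rcases eq_or_lt_of_le hS0 with hS0' | hSpos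
    · rw [← hS0']; positivity
    · rw [le_div_iff₀ hnl]
      have : (n : ℝ) * lam * S * S ≤ B * C * S := by nlinarith [hkey]
      exact le_of_mul_le_mul_right (by linarith) hSpos
  -- conclude
  have hfinal : |z ⬝ᵥ w| ≤ B * S := by
    calc |z ⬝ᵥ w| = |∑ j, z j * w j| := rfl
      _ ≤ Real.sqrt (∑ j, z j ^ 2) * Real.sqrt (∑ j, w j ^ 2) := cs_abs _ _
      _ ≤ B * S := by rw [hS]; exact mul_le_mul_of_nonneg_right hz (Real.sqrt_nonneg _)
  calc |z ⬝ᵥ w| ≤ B * S := hfinal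
    _ ≤ B * (B * C / ((n : ℝ) * lam)) := mul_le_mul_of_nonneg_left hSbound hB0
    _ = (d : ℝ) * r ^ 2 * C / ((n : ℝ) * lam) := by
        rw [mul_div_assoc'] ; rw [← mul_assoc, ← sq, hB2]
end

section
/- Let (Ω, ℱ, P) be a probability space. Let X : Ω → ℝ be a random variable whose law is the uniform distribution on [−1, 1], let a : Ω → {−1, 1} be a random variable with P(a = 1) = P(a = −1) = 1/2, and let π : Ω → {1, 2} be a random variable. Assume that a is independent of the pair (π, X). Then E[max(a·X, 0) − 𝟙{π = 2}·a·X] ≥ 1/16. -/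
open MeasureTheory ProbabilityTheory Set
open scoped ENNReal

/-! Since `max y 0 = (y + |y|) / 2` and `|a X| = |X|`, the regret equals `(|X| + a · g(π, X)) / 2`
with `g(p, x) = ±x`. Independence gives `E[a · g(π, X)] = E[a] · E[g(π, X)] = 0`, so the expected
regret is `E|X| / 2 = 1/4`. -/

lemma max_zero_sub_ite_eq (y : ℝ) (q : Prop) [Decidable q] :
    max y 0 - (if q then y else 0) = (|y| + if q then -y else y) / 2 := by
  rcases le_total 0 y with hy | hy
  · split_ifs <;> simp [abs_of_nonneg hy, hy]
  · split_ifs <;> simp [abs_of_nonpos hy, hy]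

lemma max_mul_zero_sub_ite_eq {s : ℝ} (hs : s = 1 ∨ s = -1) (x : ℝ) (q : Prop) [Decidable q] :
    max (s * x) 0 - (if q then s * x else 0) = (|x| + s * if q then -x else x) / 2 := by
  rw [max_zero_sub_ite_eq]
  rcases hs with rfl | rfl <;> split_ifs <;> simp

lemma integral_eq_zero_of_eq_one_or_neg_one {Ω : Type*} [MeasurableSpace Ω] {P : Measure Ω}
    [IsProbabilityMeasure P] {a : Ω → ℝ} (ha : Measurable a) (haval : ∀ ω, a ω = 1 ∨ a ω = -1)
    (ha1 : P {ω | a ω = 1} = 1 / 2) : ∫ ω, a ω ∂P = 0 := by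
  have hA : MeasurableSet {ω | a ω = 1} := ha (measurableSet_singleton 1)
  have ha_eq : a = fun ω => {ω | a ω = 1}.indicator (fun _ => (2 : ℝ)) ω - 1 := by
    funext ω
    rcases haval ω with h | h <;> norm_num [indicator_apply, h]
  rw [ha_eq, integral_sub ((integrable_const 2).indicator hA) (integrable_const 1),
    integral_indicator_const _ hA, measureReal_def, ha1]
  simp

lemma setIntegral_abs_Icc_neg {r : ℝ} (hr : 0 ≤ r) : ∫ x in Icc (-r) r, |x| = r ^ 2 := by
  rw [integral_Icc_eq_integral_Ioc, ← intervalIntegral.integral_of_le (by linarith),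
    ← intervalIntegral.integral_add_adjacent_intervals (b := 0)
      (continuous_abs.intervalIntegrable _ _) (continuous_abs.intervalIntegrable _ _)]
  have h_neg : ∫ x in -r..0, |x| = ∫ x in -r..0, -x :=
    intervalIntegral.integral_congr fun x hx => by
      rw [uIcc_of_le (by linarith)] at hx
      exact abs_of_nonpos hx.2
  have h_pos : ∫ x in (0 : ℝ)..r, |x| = ∫ x in (0 : ℝ)..r, x :=
    intervalIntegral.integral_congr fun x hx => by
      rw [uIcc_of_le hr] at hx
      exact abs_of_nonneg hx.1
  rw [h_neg, h_pos, intervalIntegral.integral_neg, integral_id, integral_id]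
  ring

theorem stmt15_general {Ω : Type*} [MeasurableSpace Ω] (P : Measure Ω) [IsProbabilityMeasure P]
    (X a : Ω → ℝ) (π : Ω → ℕ)
    (hX : Measurable X) (ha : Measurable a) (hπ : Measurable π)
    (hXlaw : Measure.map X P = (2 : ℝ≥0∞)⁻¹ • volume.restrict (Set.Icc (-1 : ℝ) 1))
    (haval : ∀ ω, a ω = 1 ∨ a ω = -1)
    (ha1 : P {ω | a ω = 1} = 1/2)
    (hindep : ProbabilityTheory.IndepFun a (fun ω => (π ω, X ω)) P) :
    (1 : ℝ)/16 ≤ ∫ ω, (max (a ω * X ω) 0 - (if π ω = 2 then a ω * X ω else 0)) ∂P := by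
  set g : ℕ × ℝ → ℝ := fun z => if z.1 = 2 then -z.2 else z.2
  have hg : Measurable g :=
    Measurable.ite (measurable_fst (measurableSet_singleton 2)) measurable_snd.neg measurable_snd
  have hX_int : Integrable X P := by
    have h_id : Integrable id (Measure.map X P) := by
      rw [hXlaw]
      exact (continuous_id.integrableOn_Icc (f := id)).integrable.smul_measure (by simp)
    exact (integrable_map_measure aestronglyMeasurable_id hX.aemeasurable).mp h_id
  have hag_int : Integrable (fun ω => a ω * g (π ω, X ω)) P :=
    hX_int.mono (ha.mul (hg.comp (hπ.prodMk hX))).aestronglyMeasurable <| .of_forall fun ω => by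
      rcases haval ω with h | h <;> simp only [g] <;> split_ifs <;> simp [h]
  have h_abs : ∫ ω, |X ω| ∂P = 1 / 2 := by
    rw [← integral_map hX.aemeasurable continuous_abs.aestronglyMeasurable, hXlaw,
      integral_smul_measure, setIntegral_abs_Icc_neg zero_le_one]
    norm_num
  have h_indep : ∫ ω, a ω * g (π ω, X ω) ∂P = 0 := by
    have h := hindep.integral_fun_comp_mul_comp (f := id) ha.aemeasurable
      (hπ.prodMk hX).aemeasurable aestronglyMeasurable_id hg.aestronglyMeasurable
    simpa only [id, integral_eq_zero_of_eq_one_or_neg_one ha haval ha1, zero_mul] using h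
  calc (1 : ℝ) / 16 ≤ (∫ ω, |X ω| ∂P + ∫ ω, a ω * g (π ω, X ω) ∂P) / 2 := by
        rw [h_abs, h_indep]; norm_num
    _ = _ := by
      rw [← integral_add hX_int.abs hag_int, ← integral_div]
      exact integral_congr_ae (.of_forall fun ω => (max_mul_zero_sub_ite_eq (haval ω) _ _).symm)

/-- Per-round regret bound of Theorem 5.5: with `X` uniform on `[−1, 1]`, `a` a Rademacher
sign, and a decision `π ∈ {1, 2}` such that `a` is independent of `(π, X)`, the expected
instantaneous regret `E[max(aX, 0) − 1{π = 2}·aX]` is at least `1/16`. -/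
theorem stmt15 {Ω : Type*} [MeasurableSpace Ω] (P : Measure Ω) [IsProbabilityMeasure P]
    (X a : Ω → ℝ) (π : Ω → ℕ)
    (hX : Measurable X) (ha : Measurable a) (hπ : Measurable π)
    (hXlaw : Measure.map X P = (2 : ℝ≥0∞)⁻¹ • volume.restrict (Set.Icc (-1 : ℝ) 1))
    (haval : ∀ ω, a ω = 1 ∨ a ω = -1)
    (ha1 : P {ω | a ω = 1} = 1/2) (haneg : P {ω | a ω = -1} = 1/2)
    (hπval : ∀ ω, π ω = 1 ∨ π ω = 2)
    (hindep : ProbabilityTheory.IndepFun a (fun ω => (π ω, X ω)) P) :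
    (1 : ℝ)/16 ≤ ∫ ω, (max (a ω * X ω) 0 - (if π ω = 2 then a ω * X ω else 0)) ∂P :=
  stmt15_general P X a π hX ha hπ hXlaw haval ha1 hindep
end
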